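/- Let U ⊆ ℝ² be open and let u : U → ℝ be a smooth solution of Burgers' equation u_t + u·u_x = u_{xx} on U such that u_{tx}·u_{xxx} − u_{xx}·u_{txx} ≠ 0 everywhere on U. Let h : W → ℝ be a smooth function on an open set W ⊆ ℝ² containing {(u_x(p), u_{xx}(p)) : p ∈ U}, and suppose u_{xxx}(p) = h(u_x(p), u_{xx}(p)) for all p ∈ U. Then h satisfies the quotient equation of Burgers' equation along the solution: for every p ∈ U, writing I = u_x(p), J = u_{xx}(p), one has J²·h_{II} + 2·J·h·h_{IJ} + h²·h_{JJ} + I²·h_I + 3·I·J·h_J − 4·I·h − 3·J² = 0, where h and all its partial derivatives (h_I = ∂₁h, h_J = ∂₂h, h_{II} = ∂₁²h, h_{IJ} = ∂₁∂₂h, h_{JJ} = ∂₂²h) are evaluated at (I,J). -/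

import Mathlib

open Real

/-- Partial derivative of a function of two real variables w.r.t. its first argument. -/
noncomputable def d1 (f : ℝ → ℝ → ℝ) (a b : ℝ) : ℝ := deriv (fun s => f s b) a

/-- Partial derivative of a function of two real variables w.r.t. its second argument. -/
noncomputable def d2 (f : ℝ → ℝ → ℝ) (a b : ℝ) : ℝ := deriv (fun s => f a s) b

/-- A function of two real variables is smooth (infinitely differentiable). -/
def Smooth2 (f : ℝ → ℝ → ℝ) : Prop := ContDiff ℝ (⊤ : ℕ∞) (fun p : ℝ × ℝ => f p.1 p.2)

/-- A function of two real variables is smooth on a set `U ⊆ ℝ²`. -/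
def Smooth2On (f : ℝ → ℝ → ℝ) (U : Set (ℝ × ℝ)) : Prop :=
  ContDiffOn ℝ (⊤ : ℕ∞) (fun p : ℝ × ℝ => f p.1 p.2) U

/-!
Differentiate the constraint `u_xxx = h(u_x, u_xx)` twice in `x` and once in `t`. Burgers'
equation expresses `u_t` and its `x`-derivatives through `x`-derivatives of `u`, and by the
symmetry of mixed partials the `t`-derivative of `u_xxx` is the third `x`-derivative of `u_t`.
Substituting everything, the terms containing `u` itself cancel by the once-differentiated
constraint, and what is left is the syzygy at `(u_x, u_xx)`. Apart from that single
`t`-derivative, the computation takes place on one time slice and is one-variable calculus.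
-/

open Set Topology Function
open scoped ContDiff

section PartialDerivatives

variable {f : ℝ → ℝ → ℝ} {U : Set (ℝ × ℝ)} {a b : ℝ}

theorem d1_eq_fderiv (hf : DifferentiableAt ℝ (uncurry f) (a, b)) :
    d1 f a b = fderiv ℝ (uncurry f) (a, b) (1, 0) := by
  have := hf.hasFDerivAt.comp_hasDerivAt a ((hasDerivAt_id a).prodMk (hasDerivAt_const a b))
  exact this.deriv

theorem d2_eq_fderiv (hf : DifferentiableAt ℝ (uncurry f) (a, b)) :
    d2 f a b = fderiv ℝ (uncurry f) (a, b) (0, 1) := by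
  have := hf.hasFDerivAt.comp_hasDerivAt b ((hasDerivAt_const b a).prodMk (hasDerivAt_id b))
  exact this.deriv

theorem hasDerivAt_d1 (hf : DifferentiableAt ℝ (uncurry f) (a, b)) :
    HasDerivAt (fun s => f s b) (d1 f a b) a := by
  rw [d1_eq_fderiv hf]
  exact hf.hasFDerivAt.comp_hasDerivAt a ((hasDerivAt_id a).prodMk (hasDerivAt_const a b))

theorem DifferentiableAt.hasDerivAt_comp_prodMk {α β : ℝ → ℝ} {α' β' s : ℝ}
    (hf : DifferentiableAt ℝ (uncurry f) (α s, β s)) (hα : HasDerivAt α α' s)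
    (hβ : HasDerivAt β β' s) :
    HasDerivAt (fun y => f (α y) (β y))
      (d1 f (α s) (β s) * α' + d2 f (α s) (β s) * β') s := by
  have hsplit : ((α', β') : ℝ × ℝ) = α' • (1, 0) + β' • (0, 1) := by simp
  have hval : fderiv ℝ (uncurry f) (α s, β s) (α', β')
      = d1 f (α s) (β s) * α' + d2 f (α s) (β s) * β' := by
    rw [hsplit, map_add, map_smul, map_smul, d1_eq_fderiv hf, d2_eq_fderiv hf, smul_eq_mul,
      smul_eq_mul, mul_comm, mul_comm β']
  rw [← hval]
  exact hf.hasFDerivAt.comp_hasDerivAt s (hα.prodMk hβ)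

theorem d1_comp_of_eventuallyEq {g A B : ℝ → ℝ → ℝ}
    (hA : DifferentiableAt ℝ (uncurry A) (a, b)) (hB : DifferentiableAt ℝ (uncurry B) (a, b))
    (hf : DifferentiableAt ℝ (uncurry f) (A a b, B a b))
    (hg : ∀ᶠ s in 𝓝 a, g s b = f (A s b) (B s b)) :
    d1 g a b = d1 f (A a b) (B a b) * d1 A a b + d2 f (A a b) (B a b) * d1 B a b :=
  ((hf.hasDerivAt_comp_prodMk (α := fun s => A s b) (β := fun s => B s b) (hasDerivAt_d1 hA)
    (hasDerivAt_d1 hB)).congr_of_eventuallyEq hg).deriv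

namespace Smooth2On

theorem differentiableAt (hf : Smooth2On f U) (hU : IsOpen U) {p : ℝ × ℝ}
    (hp : p ∈ U) : DifferentiableAt ℝ (uncurry f) p :=
  ((hf p hp).contDiffAt (hU.mem_nhds hp)).differentiableAt (by simp)

theorem eqOn_d1 (hf : Smooth2On f U) (hU : IsOpen U) :
    EqOn (uncurry (d1 f)) (fun q => fderiv ℝ (uncurry f) q (1, 0)) U :=
  fun _ hq => d1_eq_fderiv (hf.differentiableAt hU hq)

theorem eqOn_d2 (hf : Smooth2On f U) (hU : IsOpen U) :
    EqOn (uncurry (d2 f)) (fun q => fderiv ℝ (uncurry f) q (0, 1)) U :=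
  fun _ hq => d2_eq_fderiv (hf.differentiableAt hU hq)

theorem d1_of_isOpen (hf : Smooth2On f U) (hU : IsOpen U) : Smooth2On (d1 f) U :=
  (((hf : ContDiffOn ℝ ∞ (uncurry f) U).fderiv_of_isOpen hU (by simp)).clm_apply
    contDiffOn_const).congr (hf.eqOn_d1 hU)

theorem d2_of_isOpen (hf : Smooth2On f U) (hU : IsOpen U) : Smooth2On (d2 f) U :=
  (((hf : ContDiffOn ℝ ∞ (uncurry f) U).fderiv_of_isOpen hU (by simp)).clm_apply
    contDiffOn_const).congr (hf.eqOn_d2 hU)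

theorem d2_iterate_of_isOpen (hf : Smooth2On f U) (hU : IsOpen U) (n : ℕ) :
    Smooth2On (d2^[n] f) U := by
  induction n with
  | zero => exact hf
  | succ n ih => rw [iterate_succ_apply']; exact ih.d2_of_isOpen hU

theorem d1_d2_eq_d2_d1 (hf : Smooth2On f U) (hU : IsOpen U) (hp : (a, b) ∈ U) :
    d1 (d2 f) a b = d2 (d1 f) a b := by
  have hF : ContDiffAt ℝ ∞ (uncurry f) (a, b) := (hf _ hp).contDiffAt (hU.mem_nhds hp)
  have hF' : DifferentiableAt ℝ (fderiv ℝ (uncurry f)) (a, b) :=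
    (hF.fderiv_right (m := 1) (by decide)).differentiableAt one_ne_zero
  have hsecond (v w : ℝ × ℝ) : fderiv ℝ (fun q => fderiv ℝ (uncurry f) q w) (a, b) v
      = fderiv ℝ (fderiv ℝ (uncurry f)) (a, b) v w := by
    rw [fderiv_clm_apply hF' (differentiableAt_const w)]
    simp
  rw [d1_eq_fderiv ((hf.d2_of_isOpen hU).differentiableAt hU hp),
    d2_eq_fderiv ((hf.d1_of_isOpen hU).differentiableAt hU hp),
    ((hf.eqOn_d2 hU).eventuallyEq_of_mem (hU.mem_nhds hp)).fderiv_eq,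
    ((hf.eqOn_d1 hU).eventuallyEq_of_mem (hU.mem_nhds hp)).fderiv_eq, hsecond, hsecond]
  exact hF.isSymmSndFDerivAt (by simp only [minSmoothness_of_isRCLikeNormedField]; decide) _ _

theorem contDiffOn_slice (hf : Smooth2On f U) (a : ℝ) :
    ContDiffOn ℝ ∞ (f a) (Prod.mk a ⁻¹' U) :=
  (hf : ContDiffOn ℝ ∞ (uncurry f) U).comp (contDiff_const.prodMk contDiff_id).contDiffOn
    fun _ hy => hy

theorem eqOn_d1_d2_iterate (hf : Smooth2On f U) (hU : IsOpen U) (a : ℝ) (n : ℕ) :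
    EqOn (d1 (d2^[n] f) a) (deriv^[n] (d1 f a)) (Prod.mk a ⁻¹' U) := by
  induction n with
  | zero => exact fun _ _ => rfl
  | succ n ih =>
    intro y hy
    rw [iterate_succ_apply', iterate_succ_apply',
      (hf.d2_iterate_of_isOpen hU n).d1_d2_eq_d2_d1 hU hy]
    exact ih.deriv (hU.preimage (Continuous.prodMk_right a)) hy

end Smooth2On

end PartialDerivatives

noncomputable def burgersSyzygy (h : ℝ → ℝ → ℝ) (I J : ℝ) : ℝ :=
  J ^ 2 * d1 (d1 h) I J + 2 * J * h I J * d1 (d2 h) I J + h I J ^ 2 * d2 (d2 h) I J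
    + I ^ 2 * d1 h I J + 3 * I * J * d2 h I J - 4 * I * h I J - 3 * J ^ 2

section OneVariable

variable {V : Set ℝ} {v : ℝ → ℝ} {W : Set (ℝ × ℝ)} {h : ℝ → ℝ → ℝ}

theorem ContDiffOn.iterate_deriv_of_isOpen (hv : ContDiffOn ℝ ∞ v V) (hV : IsOpen V)
    (n : ℕ) : ContDiffOn ℝ ∞ (deriv^[n] v) V := by
  induction n with
  | zero => exact hv
  | succ n ih => rw [iterate_succ_apply']; exact ih.deriv_of_isOpen hV (by simp)

theorem ContDiffOn.hasDerivAt_iterate_deriv (hv : ContDiffOn ℝ ∞ v V) (hV : IsOpen V) {x : ℝ}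
    (hx : x ∈ V) (n : ℕ) : HasDerivAt (deriv^[n] v) (deriv^[n + 1] v x) x := by
  rw [iterate_succ_apply']
  exact (((hv.iterate_deriv_of_isOpen hV n).differentiableOn (by simp)).differentiableAt
    (hV.mem_nhds hx)).hasDerivAt

theorem eqOn_iterate_deriv_of_burgers (hv : ContDiffOn ℝ ∞ v V) (hV : IsOpen V)
    {w : ℝ → ℝ} (hw : EqOn w (fun y => deriv^[2] v y - v y * deriv v y) V) :
    EqOn (deriv w) (fun y => deriv^[3] v y - deriv v y ^ 2 - v y * deriv^[2] v y) V ∧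
    EqOn (deriv^[2] w)
      (fun y => deriv^[4] v y - 3 * deriv v y * deriv^[2] v y - v y * deriv^[3] v y) V ∧
    EqOn (deriv^[3] w) (fun y => deriv^[5] v y - 3 * deriv^[2] v y ^ 2
      - 4 * deriv v y * deriv^[3] v y - v y * deriv^[4] v y) V := by
  have hw1 : EqOn (deriv w)
      (fun y => deriv^[3] v y - deriv v y ^ 2 - v y * deriv^[2] v y) V := by
    intro y hy
    have D := hv.hasDerivAt_iterate_deriv hV hy
    rw [hw.deriv hV hy]
    exact ((D 2).sub ((D 0).mul (D 1))).deriv.trans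
      (by simp only [Nat.reduceAdd, iterate_zero, iterate_one, id_eq]; ring)
  have hw2 : EqOn (deriv^[2] w)
      (fun y => deriv^[4] v y - 3 * deriv v y * deriv^[2] v y - v y * deriv^[3] v y) V := by
    intro y hy
    have D := hv.hasDerivAt_iterate_deriv hV hy
    rw [iterate_succ_apply', iterate_one, hw1.deriv hV hy]
    exact (((D 3).sub ((D 1).pow 2)).sub ((D 0).mul (D 2))).deriv.trans
      (by simp only [Nat.reduceAdd, iterate_zero, iterate_one, id_eq]; ring)
  refine ⟨hw1, hw2, fun y hy => ?_⟩
  have D := hv.hasDerivAt_iterate_deriv hV hy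
  rw [iterate_succ_apply', hw2.deriv hV hy]
  exact (((D 4).sub (((D 1).const_mul 3).mul (D 2))).sub ((D 0).mul (D 3))).deriv.trans
    (by simp only [Nat.reduceAdd, iterate_zero, iterate_one, id_eq]; ring)

theorem eqOn_iterate_deriv_of_constraint (hv : ContDiffOn ℝ ∞ v V) (hV : IsOpen V)
    (hh : Smooth2On h W) (hW : IsOpen W) (hvW : MapsTo (fun y => (deriv v y, deriv^[2] v y)) V W)
    (hcon : EqOn (deriv^[3] v) (fun y => h (deriv v y) (deriv^[2] v y)) V) :
    EqOn (deriv^[4] v) (fun y => d1 h (deriv v y) (deriv^[2] v y) * deriv^[2] v y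
      + d2 h (deriv v y) (deriv^[2] v y) * deriv^[3] v y) V ∧
    EqOn (deriv^[5] v) (fun y =>
      (d1 (d1 h) (deriv v y) (deriv^[2] v y) * deriv^[2] v y
        + d2 (d1 h) (deriv v y) (deriv^[2] v y) * deriv^[3] v y) * deriv^[2] v y
      + d1 h (deriv v y) (deriv^[2] v y) * deriv^[3] v y
      + (d1 (d2 h) (deriv v y) (deriv^[2] v y) * deriv^[2] v y
        + d2 (d2 h) (deriv v y) (deriv^[2] v y) * deriv^[3] v y) * deriv^[3] v y
      + d2 h (deriv v y) (deriv^[2] v y) * deriv^[4] v y) V := by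
  have hv4 : EqOn (deriv^[4] v) (fun y => d1 h (deriv v y) (deriv^[2] v y) * deriv^[2] v y
      + d2 h (deriv v y) (deriv^[2] v y) * deriv^[3] v y) V := by
    intro y hy
    have D := hv.hasDerivAt_iterate_deriv hV hy
    rw [iterate_succ_apply', hcon.deriv hV hy]
    exact ((hh.differentiableAt hW (hvW hy)).hasDerivAt_comp_prodMk (D 1) (D 2)).deriv
  refine ⟨hv4, fun y hy => ?_⟩
  have D := hv.hasDerivAt_iterate_deriv hV hy
  have chain {g : ℝ → ℝ → ℝ} (hg : Smooth2On g W) :=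
    (hg.differentiableAt hW (hvW hy)).hasDerivAt_comp_prodMk (D 1) (D 2)
  rw [iterate_succ_apply', hv4.deriv hV hy]
  exact (((chain (hh.d1_of_isOpen hW)).mul (D 2)).add
    ((chain (hh.d2_of_isOpen hW)).mul (D 3))).deriv.trans (by simp only [Nat.reduceAdd]; ring)

/-- On a time slice, `v = u(t, ·)` and `w = u_t(t, ·)`; `htime` is the `t`-derivative of the
constraint, with the mixed partials already commuted so that only `x`-derivatives of `w` occur. -/
theorem burgersSyzygy_eq_zero_of_slice (hv : ContDiffOn ℝ ∞ v V) (hV : IsOpen V)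
    (hh : Smooth2On h W) (hW : IsOpen W) (hvW : MapsTo (fun y => (deriv v y, deriv^[2] v y)) V W)
    {w : ℝ → ℝ} (hw : EqOn w (fun y => deriv^[2] v y - v y * deriv v y) V)
    (hcon : EqOn (deriv^[3] v) (fun y => h (deriv v y) (deriv^[2] v y)) V) {x : ℝ} (hx : x ∈ V)
    (htime : deriv^[3] w x = d1 h (deriv v x) (deriv^[2] v x) * deriv w x
      + d2 h (deriv v x) (deriv^[2] v x) * deriv^[2] w x) :
    burgersSyzygy h (deriv v x) (deriv^[2] v x) = 0 := by
  obtain ⟨hw1, hw2, hw3⟩ := eqOn_iterate_deriv_of_burgers hv hV hw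
  obtain ⟨hv4, hv5⟩ := eqOn_iterate_deriv_of_constraint hv hV hh hW hvW hcon
  have hsymm := hh.d1_d2_eq_d2_d1 hW (hvW hx)
  have hH : h (deriv v x) (deriv^[2] v x) = deriv^[3] v x := (hcon hx).symm
  rw [burgersSyzygy, hH]
  linear_combination htime - hw3 hx + d1 h (deriv v x) (deriv^[2] v x) * hw1 hx
    + d2 h (deriv v x) (deriv^[2] v x) * hw2 hx - hv5 hx + v x * hv4 hx
    + deriv^[2] v x * deriv^[3] v x * hsymm

end OneVariable

theorem burgers_quotient_general
    (U : Set (ℝ × ℝ)) (hU : IsOpen U)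
    (u : ℝ → ℝ → ℝ) (hu : Smooth2On u U)
    (hsol : ∀ p ∈ U, d1 u p.1 p.2 + u p.1 p.2 * d2 u p.1 p.2 = d2 (d2 u) p.1 p.2)
    (W : Set (ℝ × ℝ)) (hW : IsOpen W)
    (hWsub : ∀ p ∈ U, (d2 u p.1 p.2, d2 (d2 u) p.1 p.2) ∈ W)
    (h : ℝ → ℝ → ℝ) (hh : Smooth2On h W)
    (hcon : ∀ p ∈ U, d2 (d2 (d2 u)) p.1 p.2 = h (d2 u p.1 p.2) (d2 (d2 u) p.1 p.2)) :
    ∀ p ∈ U,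
      (d2 (d2 u) p.1 p.2)^2 * d1 (d1 h) (d2 u p.1 p.2) (d2 (d2 u) p.1 p.2)
      + 2 * d2 (d2 u) p.1 p.2 * h (d2 u p.1 p.2) (d2 (d2 u) p.1 p.2)
          * d1 (d2 h) (d2 u p.1 p.2) (d2 (d2 u) p.1 p.2)
      + (h (d2 u p.1 p.2) (d2 (d2 u) p.1 p.2))^2
          * d2 (d2 h) (d2 u p.1 p.2) (d2 (d2 u) p.1 p.2)
      + (d2 u p.1 p.2)^2 * d1 h (d2 u p.1 p.2) (d2 (d2 u) p.1 p.2)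
      + 3 * d2 u p.1 p.2 * d2 (d2 u) p.1 p.2
          * d2 h (d2 u p.1 p.2) (d2 (d2 u) p.1 p.2)
      - 4 * d2 u p.1 p.2 * h (d2 u p.1 p.2) (d2 (d2 u) p.1 p.2)
      - 3 * (d2 (d2 u) p.1 p.2)^2 = 0 := by
  rintro ⟨t, x⟩ hp
  have hsmooth : ∀ n, Smooth2On (d2^[n] u) U := hu.d2_iterate_of_isOpen hU
  have hcon_t : ∀ᶠ s in 𝓝 t, d2^[3] u s x = h (d2^[1] u s x) (d2^[2] u s x) := by
    filter_upwards [(Continuous.prodMk_left x).continuousAt.preimage_mem_nhds (hU.mem_nhds hp)]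
      with s hs using hcon (s, x) hs
  have htime := d1_comp_of_eventuallyEq ((hsmooth 1).differentiableAt hU hp)
    ((hsmooth 2).differentiableAt hU hp) (hh.differentiableAt hW (hWsub _ hp)) hcon_t
  rw [hu.eqOn_d1_d2_iterate hU t 3 hp, hu.eqOn_d1_d2_iterate hU t 2 hp,
    hu.eqOn_d1_d2_iterate hU t 1 hp] at htime
  exact burgersSyzygy_eq_zero_of_slice (hu.contDiffOn_slice t)
    (hU.preimage (Continuous.prodMk_right t)) hh hW (fun y hy => hWsub _ hy)
    (fun y hy => eq_sub_of_add_eq (hsol _ hy)) (fun y hy => hcon _ hy) hp htime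

/-- The quotient of Burgers' equation with respect to the symmetry algebra
`⟨∂_t, ∂_x, t∂_x + ∂_u⟩`: along a solution `u` with
`u_{tx}u_{xxx} − u_{xx}u_{txx} ≠ 0`, a smooth function `h` with `u_{xxx} = h(u_x, u_{xx})`
satisfies `J² h_{II} + 2JH h_{IJ} + H² h_{JJ} + I² h_I + 3IJ h_J − 4IH − 3J² = 0`
at `(I,J) = (u_x, u_{xx})`, `H = h(I,J)`. -/
theorem burgers_quotient
    (U : Set (ℝ × ℝ)) (hU : IsOpen U)
    (u : ℝ → ℝ → ℝ) (hu : Smooth2On u U)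
    (hsol : ∀ p ∈ U, d1 u p.1 p.2 + u p.1 p.2 * d2 u p.1 p.2 = d2 (d2 u) p.1 p.2)
    (hnd : ∀ p ∈ U,
      d1 (d2 u) p.1 p.2 * d2 (d2 (d2 u)) p.1 p.2
        - d2 (d2 u) p.1 p.2 * d1 (d2 (d2 u)) p.1 p.2 ≠ 0)
    (W : Set (ℝ × ℝ)) (hW : IsOpen W)
    (hWsub : ∀ p ∈ U, (d2 u p.1 p.2, d2 (d2 u) p.1 p.2) ∈ W)
    (h : ℝ → ℝ → ℝ) (hh : Smooth2On h W)
    (hcon : ∀ p ∈ U, d2 (d2 (d2 u)) p.1 p.2 = h (d2 u p.1 p.2) (d2 (d2 u) p.1 p.2)) :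
    ∀ p ∈ U,
      (d2 (d2 u) p.1 p.2)^2 * d1 (d1 h) (d2 u p.1 p.2) (d2 (d2 u) p.1 p.2)
      + 2 * d2 (d2 u) p.1 p.2 * h (d2 u p.1 p.2) (d2 (d2 u) p.1 p.2)
          * d1 (d2 h) (d2 u p.1 p.2) (d2 (d2 u) p.1 p.2)
      + (h (d2 u p.1 p.2) (d2 (d2 u) p.1 p.2))^2
          * d2 (d2 h) (d2 u p.1 p.2) (d2 (d2 u) p.1 p.2)
      + (d2 u p.1 p.2)^2 * d1 h (d2 u p.1 p.2) (d2 (d2 u) p.1 p.2)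
      + 3 * d2 u p.1 p.2 * d2 (d2 u) p.1 p.2
          * d2 h (d2 u p.1 p.2) (d2 (d2 u) p.1 p.2)
      - 4 * d2 u p.1 p.2 * h (d2 u p.1 p.2) (d2 (d2 u) p.1 p.2)
      - 3 * (d2 (d2 u) p.1 p.2)^2 = 0 :=
  burgers_quotient_general U hU u hu hsol W hW hWsub h hh hcon
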